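/- For every positive integer $n$, $n! \le e \sqrt{n} (n/e)^n$. -/

import Mathlib

open Real Stirling

/- Mathlib's `stirlingSeq n = n! / (√(2n) (n/e)^n)` is antitone on `n ≥ 1`, so it is bounded by its
value `e / √2` at `n = 1`; clearing the denominator gives the bound. -/

theorem stirlingSeq_le_stirlingSeq_one {n : ℕ} (hn : n ≠ 0) : stirlingSeq n ≤ exp 1 / √2 := by
  obtain ⟨m, rfl⟩ := Nat.exists_eq_succ_of_ne_zero hn
  simpa [stirlingSeq_one] using stirlingSeq'_antitone (Nat.zero_le m)

theorem factorial_le_stirlingSeq_one_mul {n : ℕ} (hn : n ≠ 0) :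
    (n.factorial : ℝ) ≤ exp 1 / √2 * (√(2 * n) * (n / exp 1) ^ n) := by
  have hpos : 0 < √(2 * n) * ((n : ℝ) / exp 1) ^ n := by
    have : (0 : ℝ) < n := by exact_mod_cast Nat.pos_of_ne_zero hn
    positivity
  exact (div_le_iff₀ hpos).mp (stirlingSeq_le_stirlingSeq_one hn)

theorem factorial_le_stirling (n : ℕ) (hn : 1 ≤ n) :
    (n.factorial : ℝ) ≤ Real.exp 1 * Real.sqrt n * ((n : ℝ) / Real.exp 1) ^ n := by
  calc (n.factorial : ℝ) ≤ exp 1 / √2 * (√(2 * n) * (n / exp 1) ^ n) :=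
        factorial_le_stirlingSeq_one_mul (Nat.one_le_iff_ne_zero.mp hn)
    _ = exp 1 * √n * (n / exp 1) ^ n := by
        rw [sqrt_mul zero_le_two]
        field_simp
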